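/- arXiv:1610.06521 — 2 statements merged into one kernel-verified Lean document; each statement's English description precedes it below -/
import Mathlib

section
/- Let H be a graph with v_H vertices and let t ≥ 2 be an integer. Then every n-vertex graph with no subgraph isomorphic to H and no induced copy of K_{2,t+1} has at most (√2 + o(1)) · t^{1/2} · (v_H + t)^{t/2} · n^{3/2} edges. -/
/-!
Let `r + 1 = v_H`. Since `H` embeds in every `v_H`-clique, `G` is `K_{r+1}`-free. The common
neighbourhood of two non-adjacent vertices contains no `(r+1)`-clique and no independent
`(t+1)`-set (with the two vertices it would span an induced `K_{2,t+1}`), so by Ramsey's bound it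
has fewer than `s = C(r+t, r)` vertices.

In the neighbourhood `D` of a vertex `v`, two vertices each adjacent to more than `(|D| + s)/2`
vertices of `D` would, if non-adjacent, share more than `s` neighbours; so these heavy vertices
form a clique with `v`, and there are fewer than `r` of them. Counting ordered pairs in `D` gives
`deg(v)² ≤ 2·#{non-adjacent pairs in N(v)} + (2r + s)·deg(v)`. Summing over `v`, the non-adjacent
pairs are double counted through their common neighbourhoods, so their total is at most `s n²`,
and Cauchy–Schwarz yields `4e² ≤ (3s + 2r) n³ ≤ 8t (v_H + t)^t n³`.
-/

open SimpleGraph Finset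

/-- `H` occurs in `G` as a (not necessarily induced) subgraph. -/
def HasCopy {α β : Type*} (H : SimpleGraph α) (G : SimpleGraph β) : Prop :=
  ∃ f : α → β, Function.Injective f ∧ ∀ a b, H.Adj a b → G.Adj (f a) (f b)

/-- `H` occurs in `G` as an induced subgraph. -/
def HasInducedCopy {α β : Type*} (H : SimpleGraph α) (G : SimpleGraph β) : Prop :=
  Nonempty (H ↪g G)

namespace SimpleGraph

variable {V : Type*} {G : SimpleGraph V}

theorem hasCopy_of_isNClique {W : Type*} [Fintype W] (H : SimpleGraph W) {s : Finset V}
    (hs : G.IsNClique (Fintype.card W) s) : HasCopy H G := by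
  let e : W ≃ s := Fintype.equivOfCardEq (by rw [Fintype.card_coe, hs.card_eq])
  refine ⟨fun a => e a, Subtype.val_injective.comp e.injective, fun a b hab => ?_⟩
  exact hs.isClique (e a).2 (e b).2 (Subtype.val_injective.ne (e.injective.ne hab.ne))

theorem hasInducedCopy_completeBipartiteGraph {α β : Type*} (f : α ↪ V) (g : β ↪ V)
    (hf : ∀ a a', ¬G.Adj (f a) (f a')) (hg : ∀ b b', ¬G.Adj (g b) (g b'))
    (hfg : ∀ a b, G.Adj (f a) (g b)) :
    HasInducedCopy (completeBipartiteGraph α β) G := by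
  refine ⟨⟨⟨Sum.elim f g, f.injective.sumElim g.injective fun a b => (hfg a b).ne⟩, ?_⟩⟩
  rintro (a | b) (a' | b') <;> simp [hf, hg, hfg, G.adj_comm (g _)]

theorem hasInducedCopy_completeBipartiteGraph_of_isNIndepSet {m k : ℕ} {S T : Finset V}
    (hS : G.IsNIndepSet m S) (hT : G.IsNIndepSet k T) (hST : ∀ x ∈ S, ∀ y ∈ T, G.Adj x y) :
    HasInducedCopy (completeBipartiteGraph (Fin m) (Fin k)) G := by
  let f := (S.equivFinOfCardEq hS.card_eq).symm.toEmbedding.trans (Function.Embedding.subtype _)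
  let g := (T.equivFinOfCardEq hT.card_eq).symm.toEmbedding.trans (Function.Embedding.subtype _)
  have hindep {I : Finset V} (hI : G.IsIndepSet I) {x y : V} (hx : x ∈ I) (hy : y ∈ I) :
      ¬G.Adj x y := fun h => hI hx hy h.ne h
  refine hasInducedCopy_completeBipartiteGraph f g (fun _ _ => hindep hS.1 ?_ ?_)
    (fun _ _ => hindep hT.1 ?_ ?_) (fun _ _ => hST _ ?_ _ ?_) <;> simp [f, g]

theorem exists_isNClique_or_isNIndepSet_of_choose_le [DecidableEq V] [DecidableRel G.Adj] :
    ∀ (a b : ℕ) (S : Finset V), (a + b).choose a ≤ #S →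
      (∃ T ⊆ S, G.IsNClique (a + 1) T) ∨ ∃ T ⊆ S, G.IsNIndepSet (b + 1) T
  | a, b, S, hS => by
    obtain ⟨v, hv⟩ : S.Nonempty := card_pos.mp ((Nat.choose_pos (by omega)).trans_le hS)
    match a, b with
    | 0, _ => exact .inl ⟨{v}, by simpa using hv, by simp⟩
    | a + 1, 0 => exact .inr ⟨{v}, by simpa using hv, by simp [← isNClique_compl]⟩
    | a + 1, b + 1 =>
      set A := {w ∈ S.erase v | G.Adj v w}
      set B := {w ∈ S.erase v | ¬G.Adj v w}
      have hAS : A ⊆ S := (filter_subset _ _).trans (erase_subset _ _)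
      have hBS : B ⊆ S := (filter_subset _ _).trans (erase_subset _ _)
      have hsplit : #A + #B + 1 = #S := by
        rw [card_filter_add_card_filter_not, card_erase_add_one hv]
      have hpascal : (a + 1 + (b + 1)).choose (a + 1) =
          (a + (b + 1)).choose a + (a + 1 + b).choose (a + 1) := by
        rw [show a + 1 + (b + 1) = a + (b + 1) + 1 by omega, Nat.choose_succ_succ',
          show a + (b + 1) = a + 1 + b by omega]
      by_cases hA : (a + (b + 1)).choose a ≤ #A
      · rcases exists_isNClique_or_isNIndepSet_of_choose_le a (b + 1) A hA with
          ⟨T, hTA, hT⟩ | ⟨T, hTA, hT⟩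
        · exact .inl ⟨insert v T, insert_subset hv (hTA.trans hAS),
            hT.insert fun w hw => (mem_filter.mp (hTA hw)).2⟩
        · exact .inr ⟨T, hTA.trans hAS, hT⟩
      · rcases exists_isNClique_or_isNIndepSet_of_choose_le (a + 1) b B (by omega) with
          ⟨T, hTB, hT⟩ | ⟨T, hTB, hT⟩
        · exact .inl ⟨T, hTB.trans hBS, hT⟩
        · refine .inr ⟨insert v T, insert_subset hv (hTB.trans hBS), ?_⟩
          rw [← isNClique_compl] at hT ⊢
          refine hT.insert fun w hw => ?_
          obtain ⟨hwv, hvw⟩ := mem_filter.mp (hTB hw)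
          exact ⟨(ne_of_mem_erase hwv).symm, hvw⟩

theorem IsClique.card_lt_of_cliqueFree {n : ℕ} {s : Finset V} (hs : G.IsClique (s : Set V))
    (hcf : G.CliqueFree n) : #s < n := by
  by_contra! h
  exact (⟨hs, rfl⟩ : G.IsNClique #s s).not_cliqueFree (hcf.mono h)

section Finite

variable [Fintype V] [DecidableEq V] [DecidableRel G.Adj] {r s : ℕ}

theorem card_commonNeighbors_lt_choose {t : ℕ} (hcf : G.CliqueFree (r + 1))
    (hind : ¬HasInducedCopy (completeBipartiteGraph (Fin 2) (Fin (t + 1))) G)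
    {u w : V} (huw : u ≠ w) (hadj : ¬G.Adj u w) :
    #(G.neighborFinset u ∩ G.neighborFinset w) < (r + t).choose r := by
  by_contra! h
  rcases exists_isNClique_or_isNIndepSet_of_choose_le (G := G) r t _ h with
    ⟨T, -, hT⟩ | ⟨T, hTN, hT⟩
  · exact hT.not_cliqueFree hcf
  · refine hind (hasInducedCopy_completeBipartiteGraph_of_isNIndepSet (S := {u, w}) ?_ hT ?_)
    · exact ⟨by simpa [isIndepSet_iff, Set.pairwise_insert, G.adj_comm w] using fun _ => hadj,
        card_pair huw⟩
    · intro x hx y hy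
      obtain ⟨hu, hw⟩ := mem_inter.mp (hTN hy)
      rcases mem_insert.mp hx with rfl | hx
      · exact (mem_neighborFinset _ _ _).mp hu
      · exact (mem_neighborFinset _ _ _).mp (mem_singleton.mp hx ▸ hw)

theorem isClique_filter_card_adj_gt
    (hcodeg : ∀ u w, u ≠ w → ¬G.Adj u w → #(G.neighborFinset u ∩ G.neighborFinset w) ≤ s)
    (D : Finset V) :
    G.IsClique ({u ∈ D | #D + s < 2 * #{w ∈ D | G.Adj u w}} : Finset V) := by
  intro x hx y hy hxy
  by_contra hnadj
  rw [mem_coe, mem_filter] at hx hy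
  have hunion := card_union_add_card_inter {w ∈ D | G.Adj x w} {w ∈ D | G.Adj y w}
  have hunion_le : #({w ∈ D | G.Adj x w} ∪ {w ∈ D | G.Adj y w}) ≤ #D :=
    card_le_card (union_subset (filter_subset _ _) (filter_subset _ _))
  have hinter_le : #({w ∈ D | G.Adj x w} ∩ {w ∈ D | G.Adj y w}) ≤ s := by
    refine (card_le_card fun w hw => ?_).trans (hcodeg x y hxy hnadj)
    simp only [mem_inter, mem_filter] at hw
    simp [hw.1.2, hw.2.2]
  omega

theorem degree_sq_le (hcf : G.CliqueFree (r + 1))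
    (hcodeg : ∀ u w, u ≠ w → ¬G.Adj u w → #(G.neighborFinset u ∩ G.neighborFinset w) ≤ s)
    (v : V) :
    G.degree v ^ 2 ≤
      2 * #{p ∈ (G.neighborFinset v).offDiag | ¬G.Adj p.1 p.2} + (2 * r + s) * G.degree v := by
  rw [← card_neighborFinset_eq_degree]
  set D := G.neighborFinset v
  set d := #D
  set A := {u ∈ D | d + s < 2 * #{w ∈ D | G.Adj u w}}
  have hA : #A + 1 ≤ r := by
    have hvA : v ∉ A := fun h => G.notMem_neighborFinset_self v (filter_subset _ _ h)
    have hclique : G.IsClique (insert v A : Finset V) := by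
      rw [coe_insert]
      exact (isClique_filter_card_adj_gt hcodeg D).insert fun u hu _ =>
        (mem_neighborFinset _ _ _).mp (filter_subset _ _ hu)
    have := hclique.card_lt_of_cliqueFree hcf
    rw [card_insert_of_notMem hvA] at this
    omega
  have hpairs : #{p ∈ D.offDiag | G.Adj p.1 p.2} + #{p ∈ D.offDiag | ¬G.Adj p.1 p.2} + d =
      d * d := by
    rw [card_filter_add_card_filter_not, offDiag_card, Nat.sub_add_cancel (Nat.le_mul_self d)]
  have hadj : #{p ∈ D.offDiag | G.Adj p.1 p.2} = ∑ u ∈ D, #{w ∈ D | G.Adj u w} := by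
    calc #{p ∈ D.offDiag | G.Adj p.1 p.2} = #{p ∈ D ×ˢ D | G.Adj p.1 p.2} := by
          congr 1; ext p; simpa [mem_offDiag] using fun h _ _ => G.ne_of_adj h
      _ = ∑ u ∈ D, #{w ∈ D | G.Adj u w} := by simp only [card_filter, sum_product]
  have hheavy : ∑ u ∈ A, #{w ∈ D | G.Adj u w} ≤ #A * d :=
    sum_le_card_nsmul _ _ _ fun u _ => card_le_card (filter_subset _ _)
  have hlight : 2 * ∑ u ∈ D with ¬(d + s < 2 * #{w ∈ D | G.Adj u w}), #{w ∈ D | G.Adj u w} ≤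
      d * (d + s) := by
    rw [mul_sum]
    refine (sum_le_card_nsmul _ _ (d + s) fun u hu => ?_).trans ?_
    · exact not_lt.mp (mem_filter.mp hu).2
    · exact Nat.mul_le_mul_right _ (card_le_card (filter_subset _ _))
  have hsum : ∑ u ∈ A, #{w ∈ D | G.Adj u w} +
      ∑ u ∈ D with ¬(d + s < 2 * #{w ∈ D | G.Adj u w}), #{w ∈ D | G.Adj u w} =
      ∑ u ∈ D, #{w ∈ D | G.Adj u w} :=
    sum_filter_add_sum_filter_not _ _ _
  have hr : #A * d + d ≤ r * d := by simpa [add_mul] using Nat.mul_le_mul_right d hA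
  rw [sq]
  linarith

theorem sum_card_nonAdj_offDiag_neighborFinset_le
    (hcodeg : ∀ u w, u ≠ w → ¬G.Adj u w → #(G.neighborFinset u ∩ G.neighborFinset w) ≤ s) :
    ∑ v, #{p ∈ (G.neighborFinset v).offDiag | ¬G.Adj p.1 p.2} ≤ s * Fintype.card V ^ 2 := by
  set P := {p ∈ (univ : Finset V).offDiag | ¬G.Adj p.1 p.2}
  set R : V → V × V → Prop := fun v p => G.Adj v p.1 ∧ G.Adj v p.2
  calc ∑ v, #{p ∈ (G.neighborFinset v).offDiag | ¬G.Adj p.1 p.2}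
      = ∑ v, #(P.bipartiteAbove R v) := by
        congr! 2 with v
        ext p
        simp only [P, R, bipartiteAbove, mem_filter, mem_offDiag, mem_neighborFinset, mem_univ,
          true_and]
        tauto
    _ = ∑ p ∈ P, #(univ.bipartiteBelow R p) := sum_card_bipartiteAbove_eq_sum_card_bipartiteBelow _
    _ ≤ ∑ _p ∈ P, s := by
        refine sum_le_sum fun p hp => ?_
        obtain ⟨⟨-, -, hne⟩, hnadj⟩ := by simpa only [P, mem_filter, mem_offDiag] using hp
        refine (card_le_card fun v hv => ?_).trans (hcodeg p.1 p.2 hne hnadj)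
        simp only [R, bipartiteBelow, mem_filter] at hv
        simp [hv.2.1.symm, hv.2.2.symm]
    _ ≤ s * Fintype.card V ^ 2 := by
        rw [sum_const, smul_eq_mul, mul_comm, sq, ← Fintype.card_prod]
        exact Nat.mul_le_mul_left s (card_le_univ P)

theorem four_mul_card_edgeFinset_sq_le (hcf : G.CliqueFree (r + 1))
    (hcodeg : ∀ u w, u ≠ w → ¬G.Adj u w → #(G.neighborFinset u ∩ G.neighborFinset w) ≤ s) :
    4 * #G.edgeFinset ^ 2 ≤ (3 * s + 2 * r) * Fintype.card V ^ 3 := by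
  set n := Fintype.card V
  have hedges : 2 * #G.edgeFinset ≤ n * n := by
    rw [← sum_degrees_eq_twice_card_edges]
    simpa using sum_le_card_nsmul univ (fun v => G.degree v) n fun v _ =>
      (G.degree_lt_card_verts v).le
  have hsq : ∑ v, G.degree v ^ 2 ≤ 2 * (s * n ^ 2) + (2 * r + s) * (2 * #G.edgeFinset) := by
    calc ∑ v, G.degree v ^ 2
        ≤ ∑ v, (2 * #{p ∈ (G.neighborFinset v).offDiag | ¬G.Adj p.1 p.2} +
            (2 * r + s) * G.degree v) := sum_le_sum fun v _ => degree_sq_le hcf hcodeg v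
      _ ≤ 2 * (s * n ^ 2) + (2 * r + s) * (2 * #G.edgeFinset) := by
        rw [sum_add_distrib, ← mul_sum, ← mul_sum, sum_degrees_eq_twice_card_edges]
        gcongr
        exact sum_card_nonAdj_offDiag_neighborFinset_le hcodeg
  calc 4 * #G.edgeFinset ^ 2 = (∑ v, G.degree v) ^ 2 := by
        rw [sum_degrees_eq_twice_card_edges]; ring
    _ ≤ n * ∑ v, G.degree v ^ 2 := by
        simpa using sq_sum_le_card_mul_sum_sq (s := univ) (f := fun v => G.degree v)
    _ ≤ n * (2 * (s * n ^ 2) + (2 * r + s) * (n * n)) := by gcongr; exact hsq.trans (by gcongr)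
    _ = (3 * s + 2 * r) * n ^ 3 := by ring

end Finite

end SimpleGraph

theorem three_mul_choose_add_two_mul_le {r t : ℕ} (ht : 1 ≤ t) :
    3 * (r + t).choose r + 2 * r ≤ 8 * t * (r + 1 + t) ^ t := by
  have hchoose : (r + t).choose r ≤ (r + 1 + t) ^ t := by
    rw [Nat.choose_symm_add]
    exact (Nat.choose_le_pow _ _).trans (Nat.pow_le_pow_left (by omega) t)
  have hr : r ≤ (r + 1 + t) ^ t := (Nat.le_add_right_of_le (Nat.le_succ r)).trans
    (Nat.le_self_pow (by omega) _)
  nlinarith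

theorem le_sqrt_two_mul_rpow_of_sq_le {x y n : ℝ} {t : ℕ} (hy : 0 ≤ y) (hn : 0 ≤ n)
    (h : x ^ 2 ≤ 2 * t * y ^ t * n ^ 3) :
    x ≤ √2 * (t : ℝ) ^ ((1 : ℝ) / 2) * y ^ ((t : ℝ) / 2) * n ^ ((3 : ℝ) / 2) := by
  have hsq {z : ℝ} (hz : 0 ≤ z) (a : ℝ) : (z ^ (a / 2)) ^ 2 = z ^ a := by
    rw [← Real.rpow_natCast, ← Real.rpow_mul hz]
    norm_num
  refine abs_le_of_sq_le_sq' ?_ (by positivity) |>.2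
  rw [mul_pow, mul_pow, mul_pow, Real.sq_sqrt zero_le_two, hsq t.cast_nonneg, hsq hy, hsq hn,
    Real.rpow_one, Real.rpow_natCast, Real.rpow_ofNat]
  exact h

/-- **Corollary.** For `t ≥ 2` and a fixed graph `H` on `v_H` vertices, every `n`-vertex
`H`-free graph with no induced `K_{2,t+1}` has at most
`(√2 + o(1))·t^{1/2}·(v_H + t)^{t/2}·n^{3/2}` edges. -/
theorem stmt5 {W : Type*} [Fintype W] (H : SimpleGraph W) (t : ℕ) (ht : 2 ≤ t) :
    ∀ ε > (0 : ℝ), ∃ N : ℕ, ∀ n ≥ N, ∀ (G : SimpleGraph (Fin n)) [DecidableRel G.Adj],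
      ¬ HasCopy H G →
      ¬ HasInducedCopy (completeBipartiteGraph (Fin 2) (Fin (t + 1))) G →
      (G.edgeFinset.card : ℝ) ≤
        (Real.sqrt 2 + ε) * (t : ℝ) ^ ((1 : ℝ) / 2) *
          ((Fintype.card W + t : ℝ)) ^ ((t : ℝ) / 2) * (n : ℝ) ^ ((3 : ℝ) / 2) := by
  intro ε hε
  refine ⟨0, fun n _ G _ hH hind => ?_⟩
  have hcf : G.CliqueFree (Fintype.card W) := fun s hs => hH (hasCopy_of_isNClique H hs)
  obtain ⟨r, hr⟩ : ∃ r, Fintype.card W = r + 1 :=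
    Nat.exists_eq_succ_of_ne_zero fun h => not_cliqueFree_zero (h ▸ hcf)
  rw [hr] at hcf
  have hcount := four_mul_card_edgeFinset_sq_le hcf fun u w huw hadj =>
    (card_commonNeighbors_lt_choose hcf hind huw hadj).le
  have hedges : #G.edgeFinset ^ 2 ≤ 2 * t * (Fintype.card W + t) ^ t * n ^ 3 := by
    refine Nat.le_of_mul_le_mul_left (hcount.trans ?_) four_pos
    rw [Fintype.card_fin, hr]
    calc (3 * (r + t).choose r + 2 * r) * n ^ 3 ≤ 8 * t * (r + 1 + t) ^ t * n ^ 3 := by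
          gcongr; exact three_mul_choose_add_two_mul_le (by omega)
      _ = 4 * (2 * t * (r + 1 + t) ^ t * n ^ 3) := by ring
  calc (#G.edgeFinset : ℝ)
      ≤ √2 * (t : ℝ) ^ ((1 : ℝ) / 2) * ((Fintype.card W + t : ℝ)) ^ ((t : ℝ) / 2) *
          (n : ℝ) ^ ((3 : ℝ) / 2) :=
        le_sqrt_two_mul_rpow_of_sq_le (by positivity) (by positivity) (by exact_mod_cast hedges)
    _ ≤ _ := by gcongr; linarith
end

section
/- Let a, r, s be positive integers and G a graph with n vertices and average degree d. If there is a positive integer t such that d^t/n^{t-1} − binom(n,s)·(r/n)^t ≥ a, then G contains a subset A of at least a vertices such that every set of s vertices in A has at least r common neighbors. -/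
/-!
Pick a uniformly random `t`-tuple `T` of vertices and let `A` be its common neighbourhood.
Then `𝔼|A| = n⁻ᵗ ∑ᵥ deg(v)ᵗ ≥ dᵗ / nᵗ⁻¹` by Jensen, while an `s`-set `S` lies in `A` with
probability `(|N(S)| / n)ᵗ`, so the expected number of `s`-sets in `A` with fewer than `r`
common neighbours is at most `C(n, s) (r / n)ᵗ`. Some `T` therefore has
`|A| - #(bad s-sets in A) ≥ a`, and deleting one vertex from each bad set leaves the required set.
-/

open SimpleGraph Finset

namespace Finset

variable {α : Type*} [DecidableEq α]

theorem exists_subset_card_le_add_forall_not_subset (A : Finset α) (𝓕 : Finset (Finset α))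
    (h𝓕 : ∀ S ∈ 𝓕, S.Nonempty) : ∃ B ⊆ A, #A ≤ #B + #𝓕 ∧ ∀ S ∈ 𝓕, ¬S ⊆ B := by
  choose f hf using h𝓕
  set I := 𝓕.attach.image fun S => f S.1 S.2
  refine ⟨A \ I, sdiff_subset, ?_, fun S hS hSB => ?_⟩
  · calc #A ≤ #(A \ I) + #I := card_le_card_sdiff_add_card
      _ ≤ #(A \ I) + #𝓕 := by grw [card_image_le, card_attach]
  · exact (mem_sdiff.1 (hSB (hf S hS))).2 (mem_image_of_mem _ (mem_attach _ ⟨S, hS⟩))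

theorem exists_card_le_forall_subset_card_eq (P : Finset α → Prop) [DecidablePred P]
    {A : Finset α} {a s : ℕ} (hs : 0 < s) (h : a + #{S ∈ A.powersetCard s | ¬P S} ≤ #A) :
    ∃ B, a ≤ #B ∧ ∀ S ⊆ B, #S = s → P S := by
  obtain ⟨B, hBA, hcard, hB⟩ := exists_subset_card_le_add_forall_not_subset A
    {S ∈ A.powersetCard s | ¬P S} fun S hS => card_pos.1 <| by
      rw [(mem_powersetCard.1 (mem_filter.1 hS).1).2]; exact hs
  refine ⟨B, by omega, fun S hSB hS => by_contra fun hP => hB S ?_ hSB⟩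
  simp [hSB.trans hBA, hS, hP]

end Finset

namespace SimpleGraph

variable {V : Type*} [Fintype V] (G : SimpleGraph V) [DecidableRel G.Adj]

def commonNeighborFinset (S : Finset V) : Finset V := {v | ∀ x ∈ S, G.Adj x v}

variable {G}

@[simp]
theorem mem_commonNeighborFinset {S : Finset V} {v : V} :
    v ∈ G.commonNeighborFinset S ↔ ∀ x ∈ S, G.Adj x v := by
  simp [commonNeighborFinset]

theorem subset_commonNeighborFinset_comm {S U : Finset V} :
    S ⊆ G.commonNeighborFinset U ↔ U ⊆ G.commonNeighborFinset S := by
  simp only [subset_iff, mem_commonNeighborFinset]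
  exact ⟨fun h u hu v hv => (h hv u hu).symm, fun h v hv u hu => (h hu v hv).symm⟩

@[simp]
theorem commonNeighborFinset_singleton (v : V) :
    G.commonNeighborFinset {v} = G.neighborFinset v := by
  ext; simp [G.adj_comm]

variable (G)

theorem card_mul_average_degree_pow_le (k : ℕ) :
    (Fintype.card V : ℝ) * (2 * #G.edgeFinset / Fintype.card V) ^ k ≤
      ∑ v, (G.degree v : ℝ) ^ k := by
  have hsum : ∑ v, (G.degree v : ℝ) = 2 * #G.edgeFinset := by
    exact_mod_cast G.sum_degrees_eq_twice_card_edges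
  rcases k with _ | k
  · simp
  rcases (Fintype.card V).eq_zero_or_pos with hV | hV
  · rw [hV, Nat.cast_zero, zero_mul]; positivity
  have hV' : (Fintype.card V : ℝ) ≠ 0 := by positivity
  rw [← hsum]
  calc _ = (∑ v, (G.degree v : ℝ)) ^ (k + 1) / #(univ : Finset V) ^ k := by
        rw [card_univ, div_pow]; field_simp; ring
    _ ≤ _ := pow_sum_div_card_le_sum_pow (fun _ _ => by positivity) k

theorem sum_card_commonNeighborFinset_pow_le (r s k : ℕ) :
    ∑ S ∈ {S ∈ univ.powersetCard s | #(G.commonNeighborFinset S) < r},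
      #(G.commonNeighborFinset S) ^ k ≤ (Fintype.card V).choose s * r ^ k := by
  calc _ ≤ ∑ _S ∈ {S ∈ univ.powersetCard s | #(G.commonNeighborFinset S) < r}, r ^ k :=
        sum_le_sum fun S hS => Nat.pow_le_pow_left (mem_filter.1 hS).2.le k
    _ ≤ #(univ.powersetCard s : Finset (Finset V)) * r ^ k := by
        rw [sum_const, smul_eq_mul]; gcongr; exact filter_subset _ _
    _ = (Fintype.card V).choose s * r ^ k := by rw [card_powersetCard, card_univ]

variable [DecidableEq V] (ι : Type*) [Fintype ι] [DecidableEq ι]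

theorem card_filter_subset_commonNeighborFinset_image (S : Finset V) :
    #{T : ι → V | S ⊆ G.commonNeighborFinset (univ.image T)} =
      #(G.commonNeighborFinset S) ^ Fintype.card ι := by
  trans #(Fintype.piFinset fun _ : ι => G.commonNeighborFinset S)
  · congr 1
    ext T
    simp [subset_commonNeighborFinset_comm (S := S), image_subset_iff]
  · simp

theorem sum_card_filter_subset_commonNeighborFinset_image (𝓢 : Finset (Finset V)) :
    ∑ T : ι → V, #{S ∈ 𝓢 | S ⊆ G.commonNeighborFinset (univ.image T)} =
      ∑ S ∈ 𝓢, #(G.commonNeighborFinset S) ^ Fintype.card ι := by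
  simp_rw [card_filter]
  rw [sum_comm]
  simp_rw [← card_filter, card_filter_subset_commonNeighborFinset_image]

theorem sum_card_commonNeighborFinset_image :
    ∑ T : ι → V, #(G.commonNeighborFinset (univ.image T)) = ∑ v, G.degree v ^ Fintype.card ι := by
  calc ∑ T : ι → V, #(G.commonNeighborFinset (univ.image T))
      _ = ∑ T : ι → V, #{v | {v} ⊆ G.commonNeighborFinset (univ.image T)} := by
        simp only [singleton_subset_iff, filter_mem_eq_inter, univ_inter]
      _ = ∑ v, #{T : ι → V | {v} ⊆ G.commonNeighborFinset (univ.image T)} := by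
        simp_rw [card_filter]; exact sum_comm
      _ = ∑ v, G.degree v ^ Fintype.card ι := by
        simp only [card_filter_subset_commonNeighborFinset_image, commonNeighborFinset_singleton,
          card_neighborFinset_eq_degree]

theorem exists_forall_le_card_commonNeighborFinset [Nonempty V] {a r s : ℕ} (hs : 0 < s)
    (h : a * Fintype.card V ^ Fintype.card ι + (Fintype.card V).choose s * r ^ Fintype.card ι ≤
      ∑ v, G.degree v ^ Fintype.card ι) :
    ∃ A, a ≤ #A ∧ ∀ S ⊆ A, #S = s → r ≤ #(G.commonNeighborFinset S) := by
  set N := fun T : ι → V => G.commonNeighborFinset (univ.image T)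
  set bad : Finset (Finset V) := {S ∈ univ.powersetCard s | #(G.commonNeighborFinset S) < r}
  have hbad (T : ι → V) : #{S ∈ (N T).powersetCard s | ¬r ≤ #(G.commonNeighborFinset S)} =
      #{S ∈ bad | S ⊆ N T} := by
    congr 1
    ext S
    simp only [not_le, mem_filter, mem_powersetCard, subset_univ, true_and, bad]
    tauto
  have hsum : ∑ T : ι → V, (a + #{S ∈ (N T).powersetCard s | ¬r ≤ #(G.commonNeighborFinset S)})
      ≤ ∑ T, #(N T) := by
    simp only [hbad, sum_add_distrib, sum_const, card_univ, Fintype.card_pi, prod_const,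
      smul_eq_mul, N, sum_card_filter_subset_commonNeighborFinset_image,
      sum_card_commonNeighborFinset_image]
    grw [sum_card_commonNeighborFinset_pow_le]
    linarith
  obtain ⟨T, -, hT⟩ := exists_le_of_sum_le univ_nonempty hsum
  exact exists_card_le_forall_subset_card_eq _ hs hT

end SimpleGraph

theorem stmt14_general (a r s : ℕ) (hs : 0 < s)
    {n : ℕ} (G : SimpleGraph (Fin n)) [DecidableRel G.Adj]
    (d : ℝ) (hd : d = 2 * (G.edgeFinset.card : ℝ) / n)
    (t : ℕ) (ht : 0 < t)
    (h : (a : ℝ) ≤ d ^ t / (n : ℝ) ^ (t - 1) - (n.choose s : ℝ) * ((r : ℝ) / n) ^ t) :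
    ∃ A : Finset (Fin n), a ≤ A.card ∧
      ∀ S ⊆ A, S.card = s → r ≤ (univ.filter fun v => ∀ x ∈ S, G.Adj x v).card := by
  rcases n.eq_zero_or_pos with rfl | hn
  · refine ⟨∅, by simpa [hd, ht.ne', Nat.choose_eq_zero_of_lt hs] using h, fun S hS hSs => ?_⟩
    simp [subset_empty.1 hS] at hSs
    omega
  have : Nonempty (Fin n) := ⟨⟨0, hn⟩⟩
  have hreal : (a * n ^ t + n.choose s * r ^ t : ℝ) ≤ n * d ^ t := by
    obtain ⟨u, rfl⟩ : ∃ u, t = u + 1 := ⟨t - 1, by omega⟩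
    have hn' : (n : ℝ) ≠ 0 := by positivity
    have hscale :
        (n : ℝ) ^ (u + 1) * (d ^ (u + 1) / n ^ (u + 1 - 1) - n.choose s * (r / n) ^ (u + 1)) =
          n * d ^ (u + 1) - n.choose s * r ^ (u + 1) := by
      rw [Nat.add_sub_cancel, div_pow]; field_simp; ring
    have := mul_le_mul_of_nonneg_left h (by positivity : (0 : ℝ) ≤ n ^ (u + 1))
    linarith
  have hJ := G.card_mul_average_degree_pow_le t
  rw [Fintype.card_fin, ← hd] at hJ
  obtain ⟨A, hA, hAS⟩ := G.exists_forall_le_card_commonNeighborFinset (Fin t) (a := a) (r := r) hs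
    (by simp only [Fintype.card_fin]; exact_mod_cast hreal.trans hJ)
  refine ⟨A, hA, fun S hSA hS => ?_⟩
  -- the two filters differ only in their decidability instances
  convert hAS S hSA hS using 2
  unfold commonNeighborFinset
  congr!

/-- **Dependent random choice.** Let `a, r, s` be positive integers and `G` a graph with
`n` vertices and average degree `d`. If there is a positive integer `t` with
`d^t/n^{t-1} − C(n,s)·(r/n)^t ≥ a`, then `G` contains a set `A` of at least `a` vertices
such that every `s` vertices of `A` have at least `r` common neighbors. -/
theorem stmt14 (a r s : ℕ) (ha : 0 < a) (hr : 0 < r) (hs : 0 < s)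
    {n : ℕ} (G : SimpleGraph (Fin n)) [DecidableRel G.Adj]
    (d : ℝ) (hd : d = 2 * (G.edgeFinset.card : ℝ) / n)
    (t : ℕ) (ht : 0 < t)
    (h : (a : ℝ) ≤ d ^ t / (n : ℝ) ^ (t - 1) - (n.choose s : ℝ) * ((r : ℝ) / n) ^ t) :
    ∃ A : Finset (Fin n), a ≤ A.card ∧
      ∀ S ⊆ A, S.card = s → r ≤ (univ.filter fun v => ∀ x ∈ S, G.Adj x v).card :=
  stmt14_general a r s hs G d hd t ht h
end
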